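/- For each fixed N_E ≥ 0, the function N_I ↦ I_2(N_E,N_I) is strictly increasing and strictly convex on [0,∞). -/
import Mathlib


/-- K(w_R, w_F) := ∫_0^∞ (e^{-s²/2}/s)(e^{s·w_F} − e^{s·w_R}) ds (Lebesgue integral on (0,∞)). -/
noncomputable def K (wR wF : ℝ) : ℝ :=
  ∫ s in Set.Ioi (0 : ℝ), Real.exp (-s ^ 2 / 2) / s * (Real.exp (s * wF) - Real.exp (s * wR))

/-- I₂(N_E,N_I) := ∫_0^∞ (e^{-s²/2}/s)(e^{s·w̃_F} − e^{s·w̃_R}) ds where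
w̃_F := (V_F − V_0^I(N_E,N_I))/√a_I, w̃_R := (V_R − V_0^I(N_E,N_I))/√a_I and
V_0^I(N_E,N_I) := b_E^I N_E − b_I^I N_I + (b_E^I − b_E^E) ν_{E,ext}. -/
noncomputable def I2 (VR VF bEE bEI bII aI ν NE NI : ℝ) : ℝ :=
  K ((VR - (bEI * NE - bII * NI + (bEI - bEE) * ν)) / Real.sqrt aI)
    ((VF - (bEI * NE - bII * NI + (bEI - bEE) * ν)) / Real.sqrt aI)

open MeasureTheory Real Set

lemma aux_exp_diff_le {a b : ℝ} : Real.exp a - Real.exp b ≤ (a - b) * Real.exp a := by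
  have h1 : Real.exp (b - a) * Real.exp a = Real.exp b := by
    rw [← Real.exp_add]; ring_nf
  nlinarith [Real.add_one_le_exp (b - a), Real.exp_pos a]

lemma K_integrableOn {wR wF : ℝ} (h : wR ≤ wF) :
    IntegrableOn
      (fun s => Real.exp (-s ^ 2 / 2) / s * (Real.exp (s * wF) - Real.exp (s * wR)))
      (Set.Ioi 0) := by
  have hdom : Integrable
      (fun s : ℝ => ((wF - wR) * Real.exp (wF ^ 2 / 2)) * Real.exp (-(1/2) * (s - wF) ^ 2)) := by
    exact ((integrable_exp_neg_mul_sq (by norm_num : (0:ℝ) < 1/2)).comp_sub_right wF).const_mul _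
  apply MeasureTheory.Integrable.mono hdom.integrableOn
  · apply Measurable.aestronglyMeasurable
    fun_prop
  · rw [ae_restrict_iff' measurableSet_Ioi]
    filter_upwards with s hs
    simp only [Set.mem_Ioi] at hs
    have hle : s * wR ≤ s * wF := mul_le_mul_of_nonneg_left h hs.le
    have hnn : 0 ≤ Real.exp (-s ^ 2 / 2) / s * (Real.exp (s * wF) - Real.exp (s * wR)) :=
      mul_nonneg (by positivity) (sub_nonneg.2 (Real.exp_le_exp.2 hle))
    have hkey : Real.exp (s * wF) - Real.exp (s * wR) ≤ (s * wF - s * wR) * Real.exp (s * wF) :=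
      aux_exp_diff_le
    rw [Real.norm_eq_abs, abs_of_nonneg hnn, Real.norm_eq_abs]
    refine le_trans ?_ (le_abs_self _)
    calc Real.exp (-s ^ 2 / 2) / s * (Real.exp (s * wF) - Real.exp (s * wR))
        ≤ Real.exp (-s ^ 2 / 2) / s * ((s * wF - s * wR) * Real.exp (s * wF)) := by
          apply mul_le_mul_of_nonneg_left hkey
          positivity
      _ = (wF - wR) * (Real.exp (-s ^ 2 / 2) * Real.exp (s * wF)) := by
          field_simp
      _ = (wF - wR) * Real.exp (wF ^ 2 / 2) * Real.exp (-(1/2) * (s - wF) ^ 2) := by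
          rw [← Real.exp_add, mul_assoc, ← Real.exp_add]
          ring_nf

lemma int_lt_int {f g : ℝ → ℝ} (hf : IntegrableOn f (Set.Ioi 0))
    (hg : IntegrableOn g (Set.Ioi 0)) (h : ∀ s ∈ Set.Ioi (0:ℝ), f s < g s) :
    ∫ s in Set.Ioi (0:ℝ), f s < ∫ s in Set.Ioi (0:ℝ), g s := by
  have hpos : 0 < ∫ s in Set.Ioi (0:ℝ), (g s - f s) := by
    rw [setIntegral_pos_iff_support_of_nonneg_ae]
    · refine lt_of_lt_of_le ?_ (measure_mono (fun s hs =>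
        (Set.mem_inter (by simpa using sub_ne_zero.2 (h s hs).ne') hs)))
      simp [Real.volume_Ioi]
    · rw [Filter.EventuallyLE, ae_restrict_iff' measurableSet_Ioi]
      filter_upwards with s hs
      exact sub_nonneg.2 (h s hs).le
    · exact hg.sub hf
  have heq := integral_sub hg hf
  linarith [heq ▸ hpos]



/- STATEMENT 4 -/
theorem I2_strictMono_strictConvex (VR VF bEE bIE bEI bII aE aI ν : ℝ)
    (hV : VR < VF) (hbEE : 0 < bEE) (hbIE : 0 < bIE) (hbEI : 0 < bEI) (hbII : 0 < bII)
    (haE : 0 < aE) (haI : 0 < aI) (hν : 0 ≤ ν) (NE : ℝ) (hNE : 0 ≤ NE) :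
    StrictMonoOn (fun NI => I2 VR VF bEE bEI bII aI ν NE NI) (Set.Ici 0) ∧
    StrictConvexOn ℝ (Set.Ici 0) (fun NI => I2 VR VF bEE bEI bII aI ν NE NI) := by
  have hc : (0:ℝ) < Real.sqrt aI := Real.sqrt_pos.2 haI
  set AF := (VF - bEI * NE - (bEI - bEE) * ν) / Real.sqrt aI with hAF
  set AR := (VR - bEI * NE - (bEI - bEE) * ν) / Real.sqrt aI with hAR
  set d := bII / Real.sqrt aI with hd'
  have hd : 0 < d := div_pos hbII hc
  have hARF : AR < AF := by
    rw [hAF, hAR, div_lt_div_iff₀ hc hc]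
    nlinarith
  have hfun : ∀ x : ℝ, (fun s => Real.exp (-s ^ 2 / 2) / s *
      (Real.exp (s * ((VF - (bEI * NE - bII * x + (bEI - bEE) * ν)) / Real.sqrt aI)) -
       Real.exp (s * ((VR - (bEI * NE - bII * x + (bEI - bEE) * ν)) / Real.sqrt aI))))
      = fun s => (Real.exp (-s ^ 2 / 2) / s * (Real.exp (s * AF) - Real.exp (s * AR)))
          * Real.exp (s * (d * x)) := by
    intro x; funext s
    have h1 : s * ((VF - (bEI * NE - bII * x + (bEI - bEE) * ν)) / Real.sqrt aI)
        = s * AF + s * (d * x) := by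
      rw [hAF, hd']; field_simp; ring
    have h2 : s * ((VR - (bEI * NE - bII * x + (bEI - bEE) * ν)) / Real.sqrt aI)
        = s * AR + s * (d * x) := by
      rw [hAR, hd']; field_simp; ring
    rw [h1, h2, Real.exp_add, Real.exp_add]; ring
  have hI : ∀ x : ℝ, I2 VR VF bEE bEI bII aI ν NE x
      = ∫ s in Set.Ioi (0:ℝ),
          (Real.exp (-s ^ 2 / 2) / s * (Real.exp (s * AF) - Real.exp (s * AR)))
            * Real.exp (s * (d * x)) := by
    intro x
    simp only [I2, K]
    rw [← hfun x]
  have hint : ∀ x : ℝ, IntegrableOn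
      (fun s => (Real.exp (-s ^ 2 / 2) / s * (Real.exp (s * AF) - Real.exp (s * AR)))
        * Real.exp (s * (d * x))) (Set.Ioi 0) := by
    intro x
    rw [← hfun x]
    apply K_integrableOn
    rw [div_le_div_iff₀ hc hc]
    nlinarith
  have hP : ∀ s ∈ Set.Ioi (0:ℝ),
      0 < Real.exp (-s ^ 2 / 2) / s * (Real.exp (s * AF) - Real.exp (s * AR)) := by
    intro s hs
    simp only [Set.mem_Ioi] at hs
    exact mul_pos (div_pos (Real.exp_pos _) hs)
      (sub_pos.2 (Real.exp_lt_exp.2 (mul_lt_mul_of_pos_left hARF hs)))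
  constructor
  · intro x _ y _ hxy
    simp only [hI]
    apply int_lt_int (hint x) (hint y)
    intro s hs
    simp only [Set.mem_Ioi] at hs
    have hPs := hP s (Set.mem_Ioi.2 hs)
    have he : Real.exp (s * (d * x)) < Real.exp (s * (d * y)) :=
      Real.exp_lt_exp.2 (by nlinarith [mul_lt_mul_of_pos_left hxy (mul_pos hs hd)])
    exact mul_lt_mul_of_pos_left he hPs
  · refine ⟨convex_Ici 0, ?_⟩
    intro x _ y _ hxy t u ht hu htu
    simp only [smul_eq_mul, hI]
    have hsum : ∫ s in Set.Ioi (0:ℝ),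
        (t * ((Real.exp (-s ^ 2 / 2) / s * (Real.exp (s * AF) - Real.exp (s * AR)))
            * Real.exp (s * (d * x)))
          + u * ((Real.exp (-s ^ 2 / 2) / s * (Real.exp (s * AF) - Real.exp (s * AR)))
            * Real.exp (s * (d * y))))
        = t * (∫ s in Set.Ioi (0:ℝ),
            (Real.exp (-s ^ 2 / 2) / s * (Real.exp (s * AF) - Real.exp (s * AR)))
              * Real.exp (s * (d * x)))
          + u * (∫ s in Set.Ioi (0:ℝ),
            (Real.exp (-s ^ 2 / 2) / s * (Real.exp (s * AF) - Real.exp (s * AR)))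
              * Real.exp (s * (d * y))) := by
      rw [integral_add ((hint x).const_mul t) ((hint y).const_mul u),
        integral_const_mul, integral_const_mul]
    rw [← hsum]
    apply int_lt_int (hint _) (((hint x).const_mul t).add ((hint y).const_mul u))
    intro s hs
    simp only [Set.mem_Ioi] at hs
    have hPs := hP s (Set.mem_Ioi.2 hs)
    have hne : s * (d * x) ≠ s * (d * y) := by
      rcases lt_or_gt_of_ne hxy with h' | h'
      · exact ne_of_lt (by nlinarith [mul_lt_mul_of_pos_left h' (mul_pos hs hd)])
      · exact ne_of_gt (by nlinarith [mul_lt_mul_of_pos_left h' (mul_pos hs hd)])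
    have key : Real.exp (s * (d * (t * x + u * y)))
        < t * Real.exp (s * (d * x)) + u * Real.exp (s * (d * y)) := by
      have h1 : s * (d * (t * x + u * y)) = t * (s * (d * x)) + u * (s * (d * y)) := by ring
      rw [h1]
      have := strictConvexOn_exp.2 (Set.mem_univ (s * (d * x))) (Set.mem_univ (s * (d * y)))
        hne ht hu htu
      simpa using this
    calc (Real.exp (-s ^ 2 / 2) / s * (Real.exp (s * AF) - Real.exp (s * AR)))
          * Real.exp (s * (d * (t * x + u * y)))
        < (Real.exp (-s ^ 2 / 2) / s * (Real.exp (s * AF) - Real.exp (s * AR)))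
          * (t * Real.exp (s * (d * x)) + u * Real.exp (s * (d * y))) :=
          mul_lt_mul_of_pos_left key hPs
      _ = t * ((Real.exp (-s ^ 2 / 2) / s * (Real.exp (s * AF) - Real.exp (s * AR)))
            * Real.exp (s * (d * x)))
          + u * ((Real.exp (-s ^ 2 / 2) / s * (Real.exp (s * AF) - Real.exp (s * AR)))
            * Real.exp (s * (d * y))) := by ring
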